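/- If Y is a wide-sense stationary random field on the unitary dual Ĝ of a compact group G, then its covariance function C_Y(π) = E(Y_π · conj(Y_ε)) is positive definite: for all N, π₁,…,π_N ∈ Ĝ and c₁,…,c_N ∈ ℂ, ∑_{m,n} c_m conj(c_n) ∑_{π∈Ĝ} M(π_m ⊗ π_n*, π) C_Y(π) ≥ 0. -/

import Mathlib

open Matrix Kronecker ComplexConjugate
open scoped Classical ComplexOrder

noncomputable section

universe u

variable (G : Type u) [Group G] [TopologicalSpace G]

/-- A continuous finite-dimensional unitary representation of `G`,
realised as a family of unitary matrices. -/
structure CRep where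
  ι : Type
  [fin : Fintype ι]
  [dec : DecidableEq ι]
  ρ : G → Matrix ι ι ℂ
  map_one : ρ 1 = 1
  map_mul : ∀ g h : G, ρ (g * h) = ρ g * ρ h
  unitary : ∀ g : G, ρ g ∈ Matrix.unitaryGroup ι ℂ
  cont : Continuous ρ

namespace CRep

attribute [instance] CRep.fin CRep.dec

variable {G}

/-- The character of a representation. -/
def char (π : CRep G) (g : G) : ℂ := (π.ρ g).trace

/-- The trivial representation. -/
def trivialRep : CRep G where
  ι := Unit
  ρ := fun _ => 1
  map_one := rfl
  map_mul := by intros; simp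
  unitary := fun _ => one_mem _
  cont := continuous_const

/-- The conjugate (contragredient) representation. -/
def conjRep (π : CRep G) : CRep G where
  ι := π.ι
  ρ := fun g => (π.ρ g).map (starRingEnd ℂ)
  map_one := by
    try dsimp only
    rw [π.map_one]
    exact Matrix.map_one _ (map_zero _) (_root_.map_one _)
  map_mul := by
    intro g h
    try dsimp only
    rw [π.map_mul, Matrix.map_mul]
  unitary := by
    intro g
    try dsimp only
    have h := π.unitary g
    rw [Matrix.mem_unitaryGroup_iff] at h ⊢
    have hs : star ((π.ρ g).map (starRingEnd ℂ)) = (π.ρ g)ᵀ := by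
      ext i j
      simp [Matrix.conjTranspose_apply]
    calc (π.ρ g).map (starRingEnd ℂ) * star ((π.ρ g).map (starRingEnd ℂ))
        = (π.ρ g).map (starRingEnd ℂ) * (π.ρ g)ᵀ := by rw [hs]
      _ = (π.ρ g * star (π.ρ g)).map (starRingEnd ℂ) := by
          rw [Matrix.map_mul]
          congr 1
          ext i j
          simp [Matrix.conjTranspose_apply]
      _ = 1 := by rw [h]; exact Matrix.map_one _ (map_zero _) (_root_.map_one _)
  cont := π.cont.matrix_map Complex.continuous_conj

/-- The tensor product of two representations (Kronecker product of matrices). -/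
def tensor (π₁ π₂ : CRep G) : CRep G where
  ι := π₁.ι × π₂.ι
  ρ := fun g => π₁.ρ g ⊗ₖ π₂.ρ g
  map_one := by
    try dsimp only
    rw [π₁.map_one, π₂.map_one]; exact Matrix.one_kronecker_one
  map_mul := by
    intro g h
    try dsimp only
    rw [π₁.map_mul, π₂.map_mul, Matrix.mul_kronecker_mul]
  unitary := by
    intro g
    try dsimp only
    have h₁ := π₁.unitary g
    have h₂ := π₂.unitary g
    rw [Matrix.mem_unitaryGroup_iff] at h₁ h₂ ⊢
    have hstar : star (π₁.ρ g ⊗ₖ π₂.ρ g) = star (π₁.ρ g) ⊗ₖ star (π₂.ρ g) := by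
      ext i j
      simp [Matrix.conjTranspose_apply, Matrix.kroneckerMap_apply]
    rw [hstar, ← Matrix.mul_kronecker_mul, h₁, h₂, Matrix.one_kronecker_one]
  cont := continuous_matrix fun i j =>
    (π₁.cont.matrix_elem i.1 j.1).mul (π₂.cont.matrix_elem i.2 j.2)

/-- Irreducibility: every matrix commuting with the representation is scalar (Schur). -/
def IsIrreducible (π : CRep G) : Prop :=
  ∀ A : Matrix π.ι π.ι ℂ, (∀ g, A * π.ρ g = π.ρ g * A) →
    ∃ c : ℂ, A = c • (1 : Matrix π.ι π.ι ℂ)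

/-- (Unitary) equivalence of representations. -/
def Equiv (π₁ π₂ : CRep G) : Prop :=
  ∃ (f : Matrix π₂.ι π₁.ι ℂ) (f' : Matrix π₁.ι π₂.ι ℂ),
    (∀ g, f * π₁.ρ g = π₂.ρ g * f) ∧ f * f' = 1 ∧ f' * f = 1

end CRep

open MeasureTheory

variable [IsTopologicalGroup G] [CompactSpace G] [MeasurableSpace G] [BorelSpace G]
variable {G}

/-- The multiplicity `M(σ, π) = ∫_G χ_σ(g⁻¹) χ_π(g) dg`. -/
def mult (μ : Measure G) (σ π : CRep G) : ℂ :=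
  ∫ g, σ.char g⁻¹ * π.char g ∂μ

variable (G) in
/-- A model of the unitary dual `Ĝ`: a complete irredundant family of
irreducible unitary representations, containing the trivial representation. -/
structure UnitaryDual where
  idx : Type
  rep : idx → CRep G
  irr : ∀ i, (rep i).IsIrreducible
  complete : ∀ π : CRep G, π.IsIrreducible → ∃ i, CRep.Equiv π (rep i)
  distinct : ∀ i j, CRep.Equiv (rep i) (rep j) → i = j
  e : idx
  he : CRep.Equiv (rep e) CRep.trivialRep

/-- The covariance `E(Y_σ * conj(Y_τ))`. -/
def cov {Ω : Type*} [MeasurableSpace Ω] (P : Measure Ω)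
    (Y : CRep G → Ω → ℂ) (σ τ : CRep G) : ℂ :=
  ∫ ω, Y σ ω * (starRingEnd ℂ) (Y τ ω) ∂P

/-- Wide-sense stationarity of a random field on the unitary dual. -/
def Stationary {Ω : Type*} [MeasurableSpace Ω] (P : Measure Ω)
    (D : UnitaryDual G) (Y : CRep G → Ω → ℂ) : Prop :=
  ∀ i j : D.idx,
    cov P Y (D.rep i) (D.rep j)
      = cov P Y ((D.rep i).tensor (D.rep j).conjRep) (D.rep D.e)

/-- Decomposability of a random field over the dual. -/
def Decomposable (μ : Measure G) {Ω : Type*} [MeasurableSpace Ω] (P : Measure Ω)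
    (D : UnitaryDual G) (Y : CRep G → Ω → ℂ) : Prop :=
  ∀ σ : CRep G, ∀ᵐ ω ∂P,
    Y σ ω = ∑' i : D.idx, mult μ σ (D.rep i) * Y (D.rep i) ω

/-!
Decomposability and finiteness of the multiplicities turn the inner sum
`∑_π M(π_m ⊗ π_n*, π) C_Y(π)` into `E(Y_{π_m ⊗ π_n*} conj Y_ε)`, which stationarity identifies
with `E(Y_{π_m} conj Y_{π_n})`. The double sum is then `E|∑_m c_m Y_{π_m}|² ≥ 0`.
-/

section Covariance

variable {K : Type*} [Group K] [TopologicalSpace K] {Ω : Type*} [MeasurableSpace Ω]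
  {P : Measure Ω}

lemma integrable_mul_conj {f g : Ω → ℂ} (hf : MemLp f 2 P) (hg : MemLp g 2 P) :
    Integrable (fun ω => f ω * conj (g ω)) P :=
  hf.integrable_mul hg.star

lemma integral_mul_conj_self_nonneg (f : Ω → ℂ) : 0 ≤ ∫ ω, f ω * conj (f ω) ∂P := by
  simp_rw [Complex.mul_conj, integral_complex_ofReal]
  exact Complex.zero_le_real.2 (integral_nonneg fun ω => Complex.normSq_nonneg _)

lemma integral_sum_mul_conj_sum {ι : Type*} [Fintype ι] (f : ι → Ω → ℂ) (c : ι → ℂ)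
    (hf : ∀ i, MemLp (f i) 2 P) :
    ∫ ω, (∑ m, c m * f m ω) * conj (∑ n, c n * f n ω) ∂P
      = ∑ m, ∑ n, c m * conj (c n) * ∫ ω, f m ω * conj (f n ω) ∂P := by
  have hint : ∀ m n, Integrable (fun ω => c m * conj (c n) * (f m ω * conj (f n ω))) P :=
    fun m n => (integrable_mul_conj (hf m) (hf n)).const_mul _
  have hexpand : ∀ ω, (∑ m, c m * f m ω) * conj (∑ n, c n * f n ω)
      = ∑ m, ∑ n, c m * conj (c n) * (f m ω * conj (f n ω)) := fun ω => by
    simp only [map_sum, map_mul, Finset.sum_mul_sum]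
    exact Finset.sum_congr rfl fun m _ => Finset.sum_congr rfl fun n _ => by ring
  simp only [hexpand]
  rw [integral_finsetSum _ fun m _ => integrable_finsetSum _ fun n _ => hint m n]
  refine Finset.sum_congr rfl fun m _ => ?_
  rw [integral_finsetSum _ fun n _ => hint m n]
  simp only [integral_const_mul]

theorem sum_sum_mul_cov_nonneg (Y : CRep K → Ω → ℂ) {ι : Type*} [Fintype ι]
    (σ : ι → CRep K) (c : ι → ℂ) (hL2 : ∀ i, MemLp (Y (σ i)) 2 P) :
    0 ≤ ∑ m, ∑ n, c m * conj (c n) * cov P Y (σ m) (σ n) := by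
  simp only [cov]
  rw [← integral_sum_mul_conj_sum (fun i => Y (σ i)) c hL2]
  exact integral_mul_conj_self_nonneg _

theorem tsum_mult_mul_cov_eq_cov [MeasurableSpace K] (μ : Measure K) (D : UnitaryDual K)
    (Y : CRep K → Ω → ℂ) (hL2 : ∀ σ, MemLp (Y σ) 2 P) (hdec : Decomposable μ P D Y)
    {σ : CRep K} (hfin : {i : D.idx | mult μ σ (D.rep i) ≠ 0}.Finite) (τ : CRep K) :
    ∑' i, mult μ σ (D.rep i) * cov P Y (D.rep i) τ = cov P Y σ τ := by
  set s := hfin.toFinset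
  have hs : ∀ i ∉ s, mult μ σ (D.rep i) = 0 := by simp [s]
  have hdecσ : Y σ =ᵐ[P] fun ω => ∑ i ∈ s, mult μ σ (D.rep i) * Y (D.rep i) ω := by
    filter_upwards [hdec σ] with ω hω
    rw [hω, tsum_eq_sum fun i hi => by rw [hs i hi, zero_mul]]
  calc ∑' i, mult μ σ (D.rep i) * cov P Y (D.rep i) τ
      = ∑ i ∈ s, mult μ σ (D.rep i) * cov P Y (D.rep i) τ :=
        tsum_eq_sum fun i hi => by rw [hs i hi, zero_mul]
    _ = ∫ ω, ∑ i ∈ s, mult μ σ (D.rep i) * (Y (D.rep i) ω * conj (Y τ ω)) ∂P := by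
        rw [integral_finsetSum _ fun i _ => (integrable_mul_conj (hL2 _) (hL2 τ)).const_mul _]
        simp only [cov, integral_const_mul]
    _ = cov P Y σ τ := by
        refine integral_congr_ae ?_
        filter_upwards [hdecσ] with ω hω
        simp only [hω, Finset.sum_mul, mul_assoc]

end Covariance

theorem stmt3_general (μ : Measure G)
    (D : UnitaryDual G) {Ω : Type*} [MeasurableSpace Ω] (P : Measure Ω)
    (Y : CRep G → Ω → ℂ)
    (hL2 : ∀ σ : CRep G, MemLp (Y σ) 2 P)
    (hdec : Decomposable μ P D Y) (hstat : Stationary P D Y)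
    (hfin : ∀ σ : CRep G, {i : D.idx | mult μ σ (D.rep i) ≠ 0}.Finite)
    (N : ℕ) (π : Fin N → D.idx) (c : Fin N → ℂ) :
    0 ≤ ∑ m : Fin N, ∑ n : Fin N, c m * (starRingEnd ℂ) (c n) *
        ∑' i : D.idx, mult μ ((D.rep (π m)).tensor (D.rep (π n)).conjRep) (D.rep i) *
          cov P Y (D.rep i) (D.rep D.e) := by
  have hcov : ∀ m n, ∑' i, mult μ ((D.rep (π m)).tensor (D.rep (π n)).conjRep) (D.rep i) *
      cov P Y (D.rep i) (D.rep D.e) = cov P Y (D.rep (π m)) (D.rep (π n)) := fun m n => by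
    rw [tsum_mult_mul_cov_eq_cov μ D Y hL2 hdec (hfin _), hstat]
  simp only [hcov]
  exact sum_sum_mul_cov_nonneg Y (fun m => D.rep (π m)) c fun m => hL2 _

/-- The covariance function of a stationary random field on the unitary dual is
positive definite. -/
theorem stmt3 (μ : Measure G) [μ.IsHaarMeasure] [IsProbabilityMeasure μ]
    (D : UnitaryDual G) {Ω : Type*} [MeasurableSpace Ω] (P : Measure Ω)
    [IsProbabilityMeasure P] (Y : CRep G → Ω → ℂ)
    (hL2 : ∀ σ : CRep G, MemLp (Y σ) 2 P)
    (hdec : Decomposable μ P D Y) (hstat : Stationary P D Y)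
    (hfin : ∀ σ : CRep G, {i : D.idx | mult μ σ (D.rep i) ≠ 0}.Finite)
    (N : ℕ) (π : Fin N → D.idx) (c : Fin N → ℂ) :
    0 ≤ ∑ m : Fin N, ∑ n : Fin N, c m * (starRingEnd ℂ) (c n) *
        ∑' i : D.idx, mult μ ((D.rep (π m)).tensor (D.rep (π n)).conjRep) (D.rep i) *
          cov P Y (D.rep i) (D.rep D.e) :=
  stmt3_general μ D P Y hL2 hdec hstat hfin N π c
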